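/- Let ψ: ℝ → ℂ be given by ψ(x) = (1/2π) ∫_ℝ e^{ixu} ψ̂(u) du and suppose ∫_ℝ ln^α(1+|u|) |ψ̂(u)| du < ∞ for some α > 0. Set ψ_{jk}(x) = 2^{j/2} ψ(2^j x − k). Then for all x, y ∈ ℝ, j ∈ ℕ₀, and k ∈ ℤ: |ψ_{jk}(x) − ψ_{jk}(y)| ≤ 2^{j/2} · max(1, j^α) · R_α · (ln(e^α + 1/|x−y|))^{−α}, where R_α = (1/π) ∫_ℝ ln^α(e^α + |u| + 2) |ψ̂(u)| du. -/

import Mathlib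

/-!
Write `ψ_{jk}(x) - ψ_{jk}(y) = 2^{j/2} (2π)⁻¹ ∫ (e^{iua} - e^{iub}) ψ̂(u) du` with
`|a - b| = 2^j h`, `h = |x - y|`, and bound the kernel by `min(2, 2^j |u| h)`.
For `c ≥ 0` one has `min(1, c h) ln^α(e^α + 1/h) ≤ ln^α(e^α + c)`: if `c h < 1`, then
`ln(e^α + 1/h) ≤ ln(e^α + c) - ln(c h)`, and `t (C - ln t)^α ≤ C^α` for `t ≤ 1 ≤ C/α`
(substitute `t = s^α` and use `-s ln s ≤ 1 - s`). Taking `c = 2^{j-1}|u|` and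
`ln(e^α + 2^{j-1}|u|) ≤ max(1, j) ln(e^α + |u| + 2)` produces the weight of `R_α`, which is
integrable against `|ψ̂|` because `ln(e^α + |u| + 2) ≤ ln(e^α + 2) + ln(1 + |u|)`.
When `ψ̂` is not integrable the Bochner integral vanishes, and so does `ψ`.
-/

open MeasureTheory

/-- `ψ_{jk}(x) = 2^{j/2} ψ(2^j x - k)`. -/
noncomputable def scaledW (ψ : ℝ → ℂ) (j : ℕ) (k : ℤ) (x : ℝ) : ℂ :=
  (((2 : ℝ) ^ ((j : ℝ) / 2) : ℝ) : ℂ) * ψ ((2 : ℝ) ^ j * x - (k : ℝ))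

open Real

lemma neg_mul_log_le_one_sub {s : ℝ} (hs : 0 < s) : -(s * log s) ≤ 1 - s := by
  have := mul_le_mul_of_nonneg_left (one_sub_inv_le_log_of_pos hs) hs.le
  rw [mul_sub, mul_inv_cancel₀ hs.ne'] at this
  linarith

lemma mul_rpow_sub_log_le {α C t : ℝ} (hα : 0 < α) (hαC : α ≤ C) (ht₀ : 0 < t) (ht₁ : t ≤ 1) :
    t * (C - log t) ^ α ≤ C ^ α := by
  -- with `t = s ^ α` the claim becomes `s * (C - α log s) ≤ C`, i.e. `α (-s log s) ≤ C (1 - s)`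
  set s := t ^ α⁻¹ with hs
  have hs₀ : 0 < s := rpow_pos_of_pos ht₀ _
  have hs₁ : s ≤ 1 := rpow_le_one ht₀.le ht₁ (inv_nonneg.mpr hα.le)
  have hts : t = s ^ α := by rw [hs, ← rpow_mul ht₀.le, inv_mul_cancel₀ hα.ne', rpow_one]
  have hlog : log t = α * log s := by rw [hts, log_rpow hs₀]
  have hlogs : log s ≤ 0 := log_nonpos hs₀.le hs₁
  have key : s * (C - α * log s) ≤ C := by
    nlinarith [neg_mul_log_le_one_sub hs₀, mul_le_mul_of_nonneg_right hαC (sub_nonneg.mpr hs₁)]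
  calc t * (C - log t) ^ α = (s * (C - α * log s)) ^ α := by
        rw [hlog, mul_rpow hs₀.le (by nlinarith), ← hts]
    _ ≤ C ^ α := by gcongr; exact mul_nonneg hs₀.le (by nlinarith)

lemma min_one_mul_log_rpow_le {α E c h : ℝ} (hα : 0 < α) (hE : exp α ≤ E) (hc : 0 ≤ c)
    (hh : 0 ≤ h) : min 1 (c * h) * log (E + 1 / h) ^ α ≤ log (E + c) ^ α := by
  have hE₁ : 1 < E := (one_lt_exp_iff.mpr hα).trans_le hE
  have hC : α ≤ log (E + c) := (le_log_iff_exp_le (by linarith)).mpr (by linarith)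
  have hL₀ : 0 ≤ log (E + 1 / h) := log_nonneg (le_add_of_le_of_nonneg hE₁.le (by positivity))
  rcases le_or_gt 1 (c * h) with hch | hch
  · have hh₀ : 0 < h := lt_of_le_of_ne hh (by rintro rfl; simp at hch; linarith)
    have : 1 / h ≤ c := by rw [div_le_iff₀ hh₀]; linarith
    rw [min_eq_left hch, one_mul]
    gcongr
  rw [min_eq_right hch.le]
  rcases (mul_nonneg hc hh).eq_or_lt with h0 | ht₀
  · rw [← h0, zero_mul]; exact rpow_nonneg (hα.le.trans hC) _
  have hh₀ : 0 < h := pos_of_mul_pos_right ht₀ hc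
  have hL : log (E + 1 / h) ≤ log (E + c) - log (c * h) := by
    rw [← log_div (by positivity) ht₀.ne']
    refine log_le_log (by positivity) ?_
    have : (E + 1 / h) * (c * h) = E * (c * h) + c := by field_simp
    rw [le_div_iff₀ ht₀, this]
    nlinarith
  calc c * h * log (E + 1 / h) ^ α ≤ c * h * (log (E + c) - log (c * h)) ^ α := by
        gcongr
    _ ≤ log (E + c) ^ α := mul_rpow_sub_log_le hα hC ht₀ hch.le

lemma log_add_two_pow_div_two_mul_le {E v : ℝ} (hE : 0 < E) (hv : 0 ≤ v) (j : ℕ) :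
    log (E + 2 ^ j / 2 * v) ≤ max 1 (j : ℝ) * log (E + v + 2) := by
  have hlog2 : log 2 ≤ log (E + v + 2) := log_le_log (by norm_num) (by linarith)
  cases j with
  | zero =>
    rw [Nat.cast_zero, max_eq_left zero_le_one, one_mul]
    exact log_le_log (by positivity) (by linarith)
  | succ n =>
    have h2n : (1 : ℝ) ≤ 2 ^ n := one_le_pow₀ (by norm_num)
    rw [max_eq_right (by simp), pow_succ, mul_div_cancel_right₀ _ two_ne_zero]
    calc log (E + 2 ^ n * v) ≤ log (2 ^ n * (E + v + 2)) :=
          log_le_log (by positivity) (by nlinarith)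
      _ = n * log 2 + log (E + v + 2) := by
          rw [log_mul (by positivity) (by positivity), log_pow]
      _ ≤ (n + 1 : ℕ) * log (E + v + 2) := by
          push_cast
          nlinarith [mul_le_mul_of_nonneg_left hlog2 (Nat.cast_nonneg (α := ℝ) n)]

lemma min_two_mul_le_log_rpow_mul_log_rpow_neg {α : ℝ} (hα : 0 < α) (j : ℕ) (u : ℝ) {h : ℝ}
    (hh : 0 ≤ h) :
    min 2 (|u| * (2 ^ j * h)) ≤
      2 * max 1 ((j : ℝ) ^ α) * log (exp α + |u| + 2) ^ α * log (exp α + 1 / h) ^ (-α) := by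
  have hexp : 1 < exp α := one_lt_exp_iff.mpr hα
  have hL : 0 < log (exp α + 1 / h) := log_pos (lt_add_of_lt_of_nonneg hexp (by positivity))
  have hM : 0 ≤ log (exp α + |u| + 2) := log_nonneg (by linarith [abs_nonneg u])
  have hweight : log (exp α + 2 ^ j / 2 * |u|) ^ α ≤
      max 1 ((j : ℝ) ^ α) * log (exp α + |u| + 2) ^ α := by
    rw [← one_rpow α, ← rpow_max zero_le_one (Nat.cast_nonneg j) hα.le,
      ← mul_rpow (zero_le_one.trans (le_max_left _ _)) hM]
    exact rpow_le_rpow (log_nonneg (lt_add_of_lt_of_nonneg hexp (by positivity)).le)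
      (log_add_two_pow_div_two_mul_le (exp_pos α) (abs_nonneg u) j) hα.le
  have key := (min_one_mul_log_rpow_le hα le_rfl
    (by positivity : (0 : ℝ) ≤ 2 ^ j / 2 * |u|) hh).trans hweight
  calc min 2 (|u| * (2 ^ j * h)) = 2 * min 1 (2 ^ j / 2 * |u| * h) := by
        rw [mul_min_of_nonneg _ _ zero_le_two]; congr 1 <;> ring
    _ ≤ 2 * (max 1 ((j : ℝ) ^ α) * log (exp α + |u| + 2) ^ α * (log (exp α + 1 / h) ^ α)⁻¹) := by
        gcongr
        rwa [le_mul_inv_iff₀ (rpow_pos_of_pos hL α)]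
    _ = _ := by rw [rpow_neg hL.le]; ring

lemma Real.add_rpow_le_two_rpow_mul_rpow_add_rpow {a b p : ℝ} (ha : 0 ≤ a) (hb : 0 ≤ b)
    (hp : 0 ≤ p) : (a + b) ^ p ≤ 2 ^ p * (a ^ p + b ^ p) := calc
  (a + b) ^ p ≤ (2 * max a b) ^ p := by
    rw [two_mul]; gcongr; exacts [le_max_left _ _, le_max_right _ _]
  _ = 2 ^ p * max (a ^ p) (b ^ p) := by
    rw [mul_rpow zero_le_two (ha.trans (le_max_left _ _)), rpow_max ha hb hp]
  _ ≤ 2 ^ p * (a ^ p + b ^ p) := by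
    gcongr; exact max_le_add_of_nonneg (rpow_nonneg ha p) (rpow_nonneg hb p)

lemma integrable_log_add_rpow_mul_norm {μ : Measure ℝ} {g : ℝ → ℂ} {α E : ℝ} (hα : 0 ≤ α)
    (hE : 0 ≤ E) (hg : Integrable g μ)
    (hint : Integrable (fun u => log (1 + |u|) ^ α * ‖g u‖) μ) :
    Integrable (fun u => log (E + |u| + 2) ^ α * ‖g u‖) μ := by
  have hcont : Continuous fun u : ℝ => log (E + |u| + 2) ^ α :=
    (Continuous.log (by fun_prop) fun u => by positivity).rpow_const fun _ => Or.inr hα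
  refine ((hg.norm.const_mul (2 ^ α * log (E + 2) ^ α)).add (hint.const_mul (2 ^ α))).mono'
    (hcont.aestronglyMeasurable.mul hg.norm.aestronglyMeasurable) (ae_of_all _ fun u => ?_)
  have hM₀ : 0 ≤ log (E + |u| + 2) := log_nonneg (by linarith [abs_nonneg u])
  have hsplit : log (E + |u| + 2) ≤ log (E + 2) + log (1 + |u|) := by
    rw [← log_mul (by positivity) (by positivity)]
    exact log_le_log (by positivity) (by nlinarith [abs_nonneg u])
  have hpow : log (E + |u| + 2) ^ α ≤ 2 ^ α * (log (E + 2) ^ α + log (1 + |u|) ^ α) :=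
    (rpow_le_rpow hM₀ hsplit hα).trans
      (add_rpow_le_two_rpow_mul_rpow_add_rpow (log_nonneg (by linarith))
        (log_nonneg (by linarith [abs_nonneg u])) hα)
  rw [Real.norm_of_nonneg (mul_nonneg (rpow_nonneg hM₀ α) (norm_nonneg _)), Pi.add_apply]
  calc log (E + |u| + 2) ^ α * ‖g u‖
      ≤ 2 ^ α * (log (E + 2) ^ α + log (1 + |u|) ^ α) * ‖g u‖ := by gcongr
    _ = _ := by ring

lemma norm_exp_I_mul_sub_exp_I_mul_le (a b : ℝ) :
    ‖Complex.exp (Complex.I * a) - Complex.exp (Complex.I * b)‖ ≤ min 2 |a - b| := by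
  refine le_min ?_ ?_
  · calc _ ≤ ‖Complex.exp (Complex.I * a)‖ + ‖Complex.exp (Complex.I * b)‖ := norm_sub_le _ _
      _ = 2 := by rw [Complex.norm_exp_I_mul_ofReal, Complex.norm_exp_I_mul_ofReal]; norm_num
  · have hfactor : Complex.exp (Complex.I * a) - Complex.exp (Complex.I * b) =
        Complex.exp (Complex.I * b) * (Complex.exp (Complex.I * ↑(a - b)) - 1) := by
      rw [mul_sub, ← Complex.exp_add]; push_cast; ring_nf
    rw [hfactor, norm_mul, Complex.norm_exp_I_mul_ofReal, one_mul, ← Real.norm_eq_abs]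
    exact norm_exp_I_mul_ofReal_sub_one_le

lemma integrable_exp_I_mul_mul_iff {μ : Measure ℝ} {g : ℝ → ℂ} (z : ℝ) :
    Integrable (fun u : ℝ => Complex.exp (Complex.I * u * z) * g u) μ ↔ Integrable g μ := by
  have hmul : ∀ (w : ℝ) {f : ℝ → ℂ}, Integrable f μ →
      Integrable (fun u : ℝ => Complex.exp (Complex.I * u * w) * f u) μ := fun w _ hf =>
    hf.bdd_mul (c := 1) (by fun_prop : Continuous _).aestronglyMeasurable
      (ae_of_all _ fun u => by simp [Complex.norm_exp])
  refine ⟨fun h => ?_, hmul z⟩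
  simpa [← mul_assoc, ← Complex.exp_add] using hmul (-z) h

lemma norm_integral_exp_I_mul_sub_le {μ : Measure ℝ} {g : ℝ → ℂ} (hg : Integrable g μ) (a b : ℝ) :
    ‖∫ u, Complex.exp (Complex.I * u * a) * g u ∂μ - ∫ u, Complex.exp (Complex.I * u * b) * g u ∂μ‖
      ≤ ∫ u, min 2 (|u| * |a - b|) * ‖g u‖ ∂μ := by
  rw [← integral_sub ((integrable_exp_I_mul_mul_iff a).2 hg)
    ((integrable_exp_I_mul_mul_iff b).2 hg)]
  refine norm_integral_le_of_norm_le
    (hg.norm.bdd_mul (c := 2) (by fun_prop : Continuous _).aestronglyMeasurable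
      (ae_of_all _ fun u => ?_)) (ae_of_all _ fun u => ?_)
  · rw [Real.norm_of_nonneg (le_min zero_le_two (by positivity))]
    exact min_le_left _ _
  have hphase : ∀ z : ℝ, Complex.exp (Complex.I * u * z) = Complex.exp (Complex.I * ↑(u * z)) :=
    fun z => by push_cast; ring_nf
  rw [← sub_mul, norm_mul, ← abs_mul, mul_sub, hphase, hphase]
  gcongr
  exact norm_exp_I_mul_sub_exp_I_mul_le _ _

-- Not Mathlib's `𝓕⁻`, whose kernel is `e^{2πiux}` with no prefactor.
noncomputable def invFourierAngular (g : ℝ → ℂ) (x : ℝ) : ℂ :=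
  ((1 / (2 * π) : ℝ) : ℂ) * ∫ u : ℝ, Complex.exp (Complex.I * u * x) * g u

lemma invFourierAngular_of_not_integrable {g : ℝ → ℂ} (hg : ¬Integrable g) :
    invFourierAngular g = 0 := by
  ext x
  rw [invFourierAngular, integral_undef (mt (integrable_exp_I_mul_mul_iff x).1 hg), mul_zero]
  rfl

lemma norm_invFourierAngular_sub_le {g : ℝ → ℂ} (hg : Integrable g) (a b : ℝ) :
    ‖invFourierAngular g a - invFourierAngular g b‖ ≤
      (2 * π)⁻¹ * ∫ u, min 2 (|u| * |a - b|) * ‖g u‖ := by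
  rw [invFourierAngular, invFourierAngular, ← mul_sub, norm_mul, Complex.norm_real,
    Real.norm_of_nonneg (by positivity), one_div]
  gcongr
  exact norm_integral_exp_I_mul_sub_le hg a b

lemma norm_invFourierAngular_sub_le_log_rpow_neg {g : ℝ → ℂ} {α : ℝ} (hα : 0 < α)
    (hg : Integrable g) (hint : Integrable (fun u => log (1 + |u|) ^ α * ‖g u‖))
    (j : ℕ) {a b h : ℝ} (hab : |a - b| = 2 ^ j * h) :
    ‖invFourierAngular g a - invFourierAngular g b‖ ≤
      max 1 ((j : ℝ) ^ α) * ((1 / π) * ∫ u, log (exp α + |u| + 2) ^ α * ‖g u‖) *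
        log (exp α + 1 / h) ^ (-α) := by
  have hh : 0 ≤ h := nonneg_of_mul_nonneg_right (hab ▸ abs_nonneg _) (by positivity)
  set K := 2 * max 1 ((j : ℝ) ^ α) * log (exp α + 1 / h) ^ (-α)
  calc ‖invFourierAngular g a - invFourierAngular g b‖
      ≤ (2 * π)⁻¹ * ∫ u, min 2 (|u| * (2 ^ j * h)) * ‖g u‖ := by
        rw [← hab]; exact norm_invFourierAngular_sub_le hg a b
    _ ≤ (2 * π)⁻¹ * ∫ u, K * (log (exp α + |u| + 2) ^ α * ‖g u‖) := by
        gcongr _ * ?_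
        refine integral_mono_of_nonneg (ae_of_all _ fun u => by positivity)
          ((integrable_log_add_rpow_mul_norm hα.le (exp_pos α).le hg hint).const_mul K)
          (ae_of_all _ fun u => ?_)
        calc min 2 (|u| * (2 ^ j * h)) * ‖g u‖
            ≤ 2 * max 1 ((j : ℝ) ^ α) * log (exp α + |u| + 2) ^ α *
                log (exp α + 1 / h) ^ (-α) * ‖g u‖ := by
              gcongr; exact min_two_mul_le_log_rpow_mul_log_rpow_neg hα j u hh
          _ = K * (log (exp α + |u| + 2) ^ α * ‖g u‖) := by ring
    _ = _ := by rw [integral_const_mul]; field_simp; ring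

lemma norm_scaledW_sub (ψ : ℝ → ℂ) (j : ℕ) (k : ℤ) (x y : ℝ) :
    ‖scaledW ψ j k x - scaledW ψ j k y‖ =
      2 ^ ((j : ℝ) / 2) * ‖ψ (2 ^ j * x - k) - ψ (2 ^ j * y - k)‖ := by
  rw [scaledW, scaledW, ← mul_sub, norm_mul, Complex.norm_real,
    Real.norm_of_nonneg (by positivity)]

/-- Oscillation lemma: if `ψ` is the inverse Fourier transform of `g = ψ̂` and
`∫ ln^α(1+|u|)|g(u)| du < ∞`, then
`|ψ_{jk}(x) - ψ_{jk}(y)| ≤ 2^{j/2} max(1, j^α) R_α ln^{-α}(e^α + 1/|x-y|)` with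
`R_α = (1/π) ∫ ln^α(e^α + |u| + 2)|g(u)| du`. -/
theorem scaled_wavelet_increment_bound (ψ g : ℝ → ℂ)
    (hrep : ∀ x : ℝ, ψ x =
      ((1 / (2 * Real.pi) : ℝ) : ℂ) * ∫ u : ℝ, Complex.exp (Complex.I * u * x) * g u)
    (α : ℝ) (hα : 0 < α)
    (hint : Integrable (fun u : ℝ => (Real.log (1 + |u|)) ^ α * ‖g u‖)) :
    ∀ (x y : ℝ) (j : ℕ) (k : ℤ),
      ‖scaledW ψ j k x - scaledW ψ j k y‖ ≤
        (2 : ℝ) ^ ((j : ℝ) / 2) * max 1 ((j : ℝ) ^ α) *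
          ((1 / Real.pi) * ∫ u : ℝ, (Real.log (Real.exp α + |u| + 2)) ^ α * ‖g u‖) *
          (Real.log (Real.exp α + 1 / |x - y|)) ^ (-α) := by
  intro x y j k
  obtain rfl : ψ = invFourierAngular g := funext hrep
  rw [norm_scaledW_sub, mul_assoc _ (max _ _), mul_assoc _ (max _ _ * _)]
  gcongr
  by_cases hg : Integrable g
  · refine norm_invFourierAngular_sub_le_log_rpow_neg hα hg hint j ?_
    rw [sub_sub_sub_cancel_right, ← mul_sub, abs_mul, abs_of_pos (by positivity)]
  · have hR : 0 ≤ ∫ u, log (exp α + |u| + 2) ^ α * ‖g u‖ := integral_nonneg fun u =>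
      mul_nonneg (rpow_nonneg (log_nonneg (by linarith [exp_pos α, abs_nonneg u])) α)
        (norm_nonneg _)
    have hL : 0 ≤ log (exp α + 1 / |x - y|) ^ (-α) :=
      rpow_nonneg (log_nonneg (le_add_of_le_of_nonneg (one_le_exp hα.le) (by positivity))) _
    simp only [invFourierAngular_of_not_integrable hg, Pi.zero_apply, sub_self, norm_zero]
    positivity
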